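/- arXiv:cs/0506104 — 5 statements merged into one kernel-verified Lean document; each statement's English description precedes it below -/
import Mathlib

section
/- Every 2-CNF theory T with n = |At(T)| atoms has at most 3^(n/3) minimal models. -/
open Classical

/-- A literal: `(true, a)` is the atom `a`, `(false, a)` is the negated atom `¬ a`. -/
abbrev Lit : Type := Bool × ℕ

/-- A clause: a finite set of literals, viewed as the disjunction of its literals. -/
abbrev Clause : Type := Finset Lit

/-- A CNF theory: a finite set of clauses. -/
abbrev CTheory : Type := Finset Clause

/-- A clause is proper: it contains no atom together with its negation. -/
def Clause.ok (c : Clause) : Prop :=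
  ∀ a : ℕ, ¬ (((true, a) : Lit) ∈ c ∧ ((false, a) : Lit) ∈ c)

/-- The set of atoms occurring in a clause. -/
def clauseAtoms (c : Clause) : Finset ℕ := c.image Prod.snd

/-- `At(T)`: the set of atoms occurring in a CNF theory. -/
def thAtoms (T : CTheory) : Finset ℕ := T.sup clauseAtoms

/-- A set of atoms `M` satisfies a literal `l`. -/
def satLit (M : Finset ℕ) (l : Lit) : Prop := if l.1 then l.2 ∈ M else l.2 ∉ M

/-- `M` is a model of the CNF theory `T`. -/
def isModel (M : Finset ℕ) (T : CTheory) : Prop := ∀ c ∈ T, ∃ l ∈ c, satLit M l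

/-- `M` is a minimal model of `T`: a model `M ⊆ At(T)` no proper subset of which is a model. -/
def isMinModel (M : Finset ℕ) (T : CTheory) : Prop :=
  isModel M T ∧ M ⊆ thAtoms T ∧ ∀ M' : Finset ℕ, M' ⊂ M → ¬ isModel M' T


/-! Induction on the number of atoms, by branching. If every minimal model of `T` in a branch
makes the literals of a partial assignment `P` true, then `M ↦ M \ atoms(P)` maps those models
injectively to minimal models of the reduct of `T` by `P`, a 2-CNF theory with at most
`n - |atoms(P)|` atoms. Hence the bound `3^(n/3)` propagates through any cover of the minimal
models by assignments fixing `k₁, …, kᵣ` atoms with `∑ 3^(-kᵢ/3) ≤ 1`. Such a cover always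
exists: a unit clause or an atom without positive occurrence fixes one atom; an atom occurring
with both signs gives two branches fixing two atoms each. Otherwise every clause is `x ∨ y`,
minimal models are minimal vertex covers of a graph, and branching on a vertex of degree at
least 3, on a vertex of degree 1, or, when every degree is 2, on two adjacent vertices gives
the branching vectors `(1, 4)`, `(2, 2)` and `(3, 3, 3)`. -/
lemma Set.ncard_biUnion_list_le {α ι : Type*} (f : ι → Set α) (l : List ι) :
    (⋃ i ∈ l, f i).ncard ≤ (l.map fun i => (f i).ncard).sum := by
  induction l with
  | nil => simp
  | cons i l ih =>
    simp only [List.mem_cons, Set.iUnion_or, Set.iUnion_union_distrib, Set.iUnion_iUnion_eq_left,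
      List.map_cons, List.sum_cons]
    exact (Set.ncard_union_le _ _).trans (Nat.add_le_add_left ih _)

lemma satLit_iff {M : Finset ℕ} {l : Lit} : satLit M l ↔ (l.2 ∈ M ↔ l.1 = true) := by
  unfold satLit; cases l.1 <;> simp

lemma satLit_congr {M N : Finset ℕ} {l : Lit} (h : l.2 ∈ M ↔ l.2 ∈ N) :
    satLit M l ↔ satLit N l := by
  rw [satLit_iff, satLit_iff, h]

lemma eq_of_satLit_of_snd_eq {M : Finset ℕ} {l l' : Lit} (hl : satLit M l) (hl' : satLit M l')
    (h : l.2 = l'.2) : l = l' := by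
  rw [satLit_iff, h] at hl
  exact Prod.ext (Bool.eq_iff_iff.mpr (hl.symm.trans (satLit_iff.mp hl'))) h

lemma Clause.ok.exists_eq_pair {c : Clause} (hc : c.ok) (h2 : c.card = 2) {l₀ : Lit}
    (hl₀ : l₀ ∈ c) : ∃ l : Lit, l.2 ≠ l₀.2 ∧ c = {l₀, l} := by
  obtain ⟨u, w, huw, rfl⟩ := Finset.card_eq_two.mp h2
  have hsnd : u.2 ≠ w.2 := by
    obtain ⟨bu, x⟩ := u
    obtain ⟨bw, y⟩ := w
    rintro (rfl : x = y)
    cases bu <;> cases bw <;> simp_all [Clause.ok]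
  rcases Finset.mem_insert.mp hl₀ with rfl | hl₀
  · exact ⟨w, hsnd.symm, rfl⟩
  · rw [Finset.mem_singleton.mp hl₀]
    exact ⟨u, hsnd, Finset.pair_comm _ _⟩

lemma mem_thAtoms {T : CTheory} {x : ℕ} : x ∈ thAtoms T ↔ ∃ c ∈ T, ∃ l ∈ c, l.2 = x := by
  simp [thAtoms, clauseAtoms, Finset.mem_sup]

lemma snd_mem_thAtoms {T : CTheory} {c : Clause} {l : Lit} (hc : c ∈ T) (hl : l ∈ c) :
    l.2 ∈ thAtoms T :=
  mem_thAtoms.mpr ⟨c, hc, l, hl, rfl⟩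

lemma isModel.satLit_of_pair_mem {M : Finset ℕ} {T : CTheory} (hM : isModel M T) {l₀ l : Lit}
    (h : ({l₀, l} : Clause) ∈ T) (h₀ : ¬ satLit M l₀) : satLit M l := by
  obtain ⟨l', hl', hsat⟩ := hM _ h
  rcases Finset.mem_insert.mp hl' with rfl | hl'
  · exact absurd hsat h₀
  · rwa [← Finset.mem_singleton.mp hl']

lemma setOf_isMinModel_finite (T : CTheory) : {M | isMinModel M T}.Finite :=
  (thAtoms T).powerset.finite_toSet.subset fun _ hM => Finset.mem_powerset.mpr hM.2.1

lemma isMinModel.exists_witness {M : Finset ℕ} {T : CTheory} (hM : isMinModel M T) {b : ℕ}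
    (hb : b ∈ M) : ∃ c ∈ T, (true, b) ∈ c ∧ ∀ l ∈ c, satLit M l → l = (true, b) := by
  obtain ⟨hmod, -, hmin⟩ := hM
  have hnot : ¬ isModel (M.erase b) T := hmin _ (Finset.erase_ssubset hb)
  simp only [isModel, not_forall, not_exists, not_and] at hnot
  obtain ⟨c, hc, hfalse⟩ := hnot
  have honly : ∀ l ∈ c, satLit M l → l = (true, b) := by
    intro l hl hsat
    have hlb : l.2 = b := by
      by_contra hne
      exact hfalse l hl ((satLit_congr (by simp [hne])).mp hsat)
    exact eq_of_satLit_of_snd_eq hsat (by simp [satLit, hb]) hlb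
  obtain ⟨l, hl, hsat⟩ := hmod c hc
  exact ⟨c, hc, honly l hl hsat ▸ hl, honly⟩

structure IsTwoCNF (T : CTheory) : Prop where
  ok : ∀ c ∈ T, c.ok
  card_le_two : ∀ c ∈ T, c.card ≤ 2

/-- `P` is a partial assignment, given by the set of literals it makes true. -/
def reduct (T : CTheory) (P : Finset Lit) : CTheory :=
  (T.filter fun c => Disjoint c P).image fun c => c.filter fun l => l.2 ∉ P.image Prod.snd

def minModelsWith (T : CTheory) (P : Finset Lit) : Set (Finset ℕ) :=
  {M | isMinModel M T ∧ ∀ l ∈ P, satLit M l}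

section Reduct

variable {T : CTheory} {P : Finset Lit} {M : Finset ℕ}

lemma mem_reduct {c' : Clause} :
    c' ∈ reduct T P ↔
      ∃ c ∈ T, Disjoint c P ∧ c.filter (fun l => l.2 ∉ P.image Prod.snd) = c' := by
  simp [reduct, and_assoc]

lemma IsTwoCNF.reduct (hT : IsTwoCNF T) : IsTwoCNF (reduct T P) where
  ok c' hc' := by
    obtain ⟨c, hc, -, rfl⟩ := mem_reduct.mp hc'
    exact fun a ha => hT.ok c hc a ⟨(Finset.mem_filter.mp ha.1).1, (Finset.mem_filter.mp ha.2).1⟩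
  card_le_two c' hc' := by
    obtain ⟨c, hc, -, rfl⟩ := mem_reduct.mp hc'
    exact (Finset.card_filter_le _ _).trans (hT.card_le_two c hc)

lemma thAtoms_reduct_subset : thAtoms (reduct T P) ⊆ thAtoms T \ P.image Prod.snd := by
  intro x hx
  obtain ⟨c', hc', l, hl, rfl⟩ := mem_thAtoms.mp hx
  obtain ⟨c, hc, -, rfl⟩ := mem_reduct.mp hc'
  obtain ⟨hlc, hlP⟩ := Finset.mem_filter.mp hl
  exact Finset.mem_sdiff.mpr ⟨snd_mem_thAtoms hc hlc, hlP⟩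

lemma mem_of_satLit_of_snd_mem (hP : ∀ p ∈ P, satLit M p) {l : Lit} (hl : satLit M l)
    (h : l.2 ∈ P.image Prod.snd) : l ∈ P := by
  obtain ⟨p, hp, hpl⟩ := Finset.mem_image.mp h
  rwa [← eq_of_satLit_of_snd_eq (hP p hp) hl hpl]

lemma isModel.sdiff_reduct (hM : isModel M T) (hP : ∀ l ∈ P, satLit M l) :
    isModel (M \ P.image Prod.snd) (reduct T P) := by
  intro c' hc'
  obtain ⟨c, hc, hdisj, rfl⟩ := mem_reduct.mp hc'
  obtain ⟨l, hl, hsat⟩ := hM c hc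
  have hlS : l.2 ∉ P.image Prod.snd :=
    fun h => Finset.disjoint_left.mp hdisj hl (mem_of_satLit_of_snd_mem hP hsat h)
  exact ⟨l, Finset.mem_filter.mpr ⟨hl, hlS⟩, (satLit_congr (by simp [hlS])).mpr hsat⟩

lemma isMinModel.sdiff_subset_thAtoms_reduct (hM : isMinModel M T) (hP : ∀ l ∈ P, satLit M l) :
    M \ P.image Prod.snd ⊆ thAtoms (reduct T P) := by
  intro b hb
  obtain ⟨hbM, hbS⟩ := Finset.mem_sdiff.mp hb
  obtain ⟨c, hc, hbc, honly⟩ := hM.exists_witness hbM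
  have hdisj : Disjoint c P := Finset.disjoint_left.mpr fun l hl hlP => by
    obtain rfl := honly l hl (hP l hlP)
    exact hbS (Finset.mem_image_of_mem Prod.snd hlP)
  exact snd_mem_thAtoms (mem_reduct.mpr ⟨c, hc, hdisj, rfl⟩) (Finset.mem_filter.mpr ⟨hbc, hbS⟩)

lemma isModel_of_isModel_reduct {N : Finset ℕ} (hN : isModel N (reduct T P))
    (hP : ∀ l ∈ P, satLit M l) :
    isModel (N \ P.image Prod.snd ∪ M ∩ P.image Prod.snd) T := by
  intro c hc
  by_cases hdisj : Disjoint c P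
  · obtain ⟨l, hl, hsat⟩ := hN _ (mem_reduct.mpr ⟨c, hc, hdisj, rfl⟩)
    obtain ⟨hlc, hlS⟩ := Finset.mem_filter.mp hl
    exact ⟨l, hlc, (satLit_congr (by simp [hlS])).mpr hsat⟩
  · obtain ⟨l, hlc, hlP⟩ := Finset.not_disjoint_iff.mp hdisj
    have hlS : l.2 ∈ P.image Prod.snd := Finset.mem_image_of_mem _ hlP
    exact ⟨l, hlc, (satLit_congr (by simp [hlS])).mpr (hP l hlP)⟩

lemma isMinModel.sdiff_reduct (hM : isMinModel M T) (hP : ∀ l ∈ P, satLit M l) :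
    isMinModel (M \ P.image Prod.snd) (reduct T P) := by
  refine ⟨hM.1.sdiff_reduct hP, hM.sdiff_subset_thAtoms_reduct hP, fun N hN hNmod => ?_⟩
  refine hM.2.2 _ ?_ (isModel_of_isModel_reduct hNmod hP)
  obtain ⟨x, hx, hxN⟩ := Finset.exists_of_ssubset hN
  have hsub : N \ P.image Prod.snd ∪ M ∩ P.image Prod.snd ⊆ M := by
    intro y hy
    simp only [Finset.mem_union, Finset.mem_sdiff, Finset.mem_inter] at hy
    rcases hy with ⟨hyN, -⟩ | ⟨hyM, -⟩
    exacts [(Finset.mem_sdiff.mp (hN.subset hyN)).1, hyM]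
  refine (Finset.ssubset_iff_of_subset hsub).mpr ⟨x, (Finset.mem_sdiff.mp hx).1, ?_⟩
  simp [hxN, (Finset.mem_sdiff.mp hx).2]

lemma injOn_sdiff_image_snd :
    Set.InjOn (· \ P.image Prod.snd) {M : Finset ℕ | ∀ l ∈ P, satLit M l} := by
  intro M₁ h₁ M₂ h₂ he
  ext x
  by_cases hx : x ∈ P.image Prod.snd
  · obtain ⟨p, hp, rfl⟩ := Finset.mem_image.mp hx
    rw [satLit_iff.mp (h₁ p hp), satLit_iff.mp (h₂ p hp)]
  · simpa [hx] using congrArg (x ∈ ·) he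

lemma ncard_minModelsWith_le :
    (minModelsWith T P).ncard ≤ {M | isMinModel M (reduct T P)}.ncard :=
  Set.ncard_le_ncard_of_injOn _ (fun _ hM => hM.1.sdiff_reduct hM.2)
    (injOn_sdiff_image_snd.mono fun _ hM => hM.2) (setOf_isMinModel_finite _)

end Reduct

noncomputable def cubeRootThree : ℝ := 3 ^ (1 / 3 : ℝ)

lemma cubeRootThree_pow_three : cubeRootThree ^ 3 = 3 := by
  rw [cubeRootThree, ← Real.rpow_natCast, ← Real.rpow_mul (by norm_num)]
  norm_num

lemma cubeRootThree_pos : 0 < cubeRootThree := by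
  unfold cubeRootThree; positivity

lemma one_le_cubeRootThree : 1 ≤ cubeRootThree := by
  by_contra! h
  have := pow_lt_one₀ cubeRootThree_pos.le h (n := 3) (by norm_num)
  rw [cubeRootThree_pow_three] at this
  norm_num at this

lemma inv_cubeRootThree_pow_three : cubeRootThree⁻¹ ^ 3 = 3⁻¹ := by
  rw [inv_pow, cubeRootThree_pow_three]

lemma inv_cubeRootThree_le_one : cubeRootThree⁻¹ ≤ 1 :=
  inv_le_one_of_one_le₀ one_le_cubeRootThree

lemma two_mul_inv_cubeRootThree_sq_le_one : 2 * cubeRootThree⁻¹ ^ 2 ≤ 1 := by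
  have hs := inv_cubeRootThree_pow_three
  refine (pow_le_one_iff_of_nonneg (by positivity) (n := 3) (by norm_num)).mp ?_
  calc (2 * cubeRootThree⁻¹ ^ 2) ^ 3 = 8 * (cubeRootThree⁻¹ ^ 3) ^ 2 := by ring
    _ ≤ 1 := by rw [hs]; norm_num

lemma inv_cubeRootThree_add_pow_four_le_one : cubeRootThree⁻¹ + cubeRootThree⁻¹ ^ 4 ≤ 1 := by
  have hs := inv_cubeRootThree_pow_three
  have h34 : cubeRootThree⁻¹ ≤ 3 / 4 := by
    refine (pow_le_pow_iff_left₀ (inv_pos.mpr cubeRootThree_pos).le (by norm_num)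
      (n := 3) (by norm_num)).mp ?_
    rw [hs]; norm_num
  calc cubeRootThree⁻¹ + cubeRootThree⁻¹ ^ 4
      = cubeRootThree⁻¹ * (1 + cubeRootThree⁻¹ ^ 3) := by ring
    _ ≤ 1 := by rw [hs]; linarith

/-- `cubeRootThree ^ n = 3 ^ (n / 3)`, with a natural exponent. -/
def MinModelBound (T : CTheory) : Prop :=
  ({M : Finset ℕ | isMinModel M T}.ncard : ℝ) ≤ cubeRootThree ^ (thAtoms T).card

def MinModelBoundBelow (T : CTheory) : Prop :=
  ∀ T', IsTwoCNF T' → (thAtoms T').card < (thAtoms T).card → MinModelBound T'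

lemma ncard_le_sum_ncard_minModelsWith {T : CTheory} (Ps : List (Finset Lit))
    (hcover : ∀ M, isMinModel M T → ∃ P ∈ Ps, ∀ l ∈ P, satLit M l) :
    {M | isMinModel M T}.ncard ≤ (Ps.map fun P => (minModelsWith T P).ncard).sum := by
  refine le_trans (Set.ncard_le_ncard ?_ ?_) (Set.ncard_biUnion_list_le _ Ps)
  · intro M hM
    obtain ⟨P, hP, hsat⟩ := hcover M hM
    exact Set.mem_biUnion hP ⟨hM, hsat⟩
  · exact (setOf_isMinModel_finite T).subset (Set.iUnion₂_subset fun _ _ _ hM => hM.1)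

section Branching

variable {T : CTheory}

lemma ncard_minModelsWith_le_pow (hT : IsTwoCNF T) (IH : MinModelBoundBelow T)
    {P : Finset Lit} (hne : P.Nonempty) (hat : P.image Prod.snd ⊆ thAtoms T) :
    ((minModelsWith T P).ncard : ℝ) ≤
      cubeRootThree ^ (thAtoms T).card * cubeRootThree⁻¹ ^ (P.image Prod.snd).card := by
  have hcard : (thAtoms (reduct T P)).card + (P.image Prod.snd).card ≤ (thAtoms T).card := by
    rw [← Finset.card_sdiff_add_card_eq_card hat]
    exact Nat.add_le_add_right (Finset.card_le_card thAtoms_reduct_subset) _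
  have hpos : 0 < (P.image Prod.snd).card := (hne.image _).card_pos
  calc ((minModelsWith T P).ncard : ℝ)
      ≤ {M | isMinModel M (reduct T P)}.ncard := by exact_mod_cast ncard_minModelsWith_le
    _ ≤ cubeRootThree ^ (thAtoms (reduct T P)).card := IH _ hT.reduct (by omega)
    _ ≤ cubeRootThree ^ ((thAtoms T).card - (P.image Prod.snd).card) :=
        pow_le_pow_right₀ one_le_cubeRootThree (by omega)
    _ = _ := by rw [pow_sub₀ _ cubeRootThree_pos.ne' (by omega), inv_pow]

theorem minModelBound_of_branching (hT : IsTwoCNF T) (IH : MinModelBoundBelow T)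
    (Ps : List (Finset Lit)) (hne : ∀ P ∈ Ps, P.Nonempty)
    (hat : ∀ P ∈ Ps, P.image Prod.snd ⊆ thAtoms T)
    (hcover : ∀ M, isMinModel M T → ∃ P ∈ Ps, ∀ l ∈ P, satLit M l)
    (hsum : (Ps.map fun P => cubeRootThree⁻¹ ^ (P.image Prod.snd).card).sum ≤ 1) :
    MinModelBound T := by
  calc ({M | isMinModel M T}.ncard : ℝ)
      ≤ (Ps.map fun P => ((minModelsWith T P).ncard : ℝ)).sum := by
        have h := (Nat.cast_le (α := ℝ)).mpr (ncard_le_sum_ncard_minModelsWith Ps hcover)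
        rwa [Nat.cast_list_sum, List.map_map] at h
    _ ≤ (Ps.map fun P => cubeRootThree ^ (thAtoms T).card *
          cubeRootThree⁻¹ ^ (P.image Prod.snd).card).sum :=
        List.sum_le_sum fun P hP => ncard_minModelsWith_le_pow hT IH (hne P hP) (hat P hP)
    _ = cubeRootThree ^ (thAtoms T).card *
          (Ps.map fun P => cubeRootThree⁻¹ ^ (P.image Prod.snd).card).sum :=
        List.sum_map_mul_left _ _ _
    _ ≤ cubeRootThree ^ (thAtoms T).card :=
        mul_le_of_le_one_right (pow_nonneg cubeRootThree_pos.le _) hsum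

end Branching

section Cases

variable {T : CTheory}

lemma minModelBound_of_empty_mem (h : (∅ : Clause) ∈ T) : MinModelBound T := by
  have hno : {M | isMinModel M T} = ∅ := Set.eq_empty_of_forall_notMem fun M hM => by
    obtain ⟨l, hl, -⟩ := hM.1 ∅ h
    simp at hl
  rw [MinModelBound, hno, Set.ncard_empty, Nat.cast_zero]
  exact pow_nonneg cubeRootThree_pos.le _

lemma minModelBound_of_thAtoms_eq_empty (h : thAtoms T = ∅) : MinModelBound T := by
  have hsub : {M | isMinModel M T} ⊆ {∅} := fun M hM => by simpa [h] using hM.2.1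
  rw [MinModelBound, h, Finset.card_empty, pow_zero, Nat.cast_le_one]
  exact (Set.ncard_le_ncard hsub).trans (Set.ncard_singleton _).le

lemma minModelBound_of_singleton_mem (hT : IsTwoCNF T) (IH : MinModelBoundBelow T)
    {l : Lit} (hl : ({l} : Clause) ∈ T) : MinModelBound T :=
  minModelBound_of_branching hT IH [{l}] (by simp)
    (by simpa using snd_mem_thAtoms hl (Finset.mem_singleton_self l))
    (fun M hM => ⟨{l}, List.mem_singleton_self _, by simpa using hM.1 _ hl⟩)
    (by simpa using inv_cubeRootThree_le_one)

lemma minModelBound_of_neg_mem (hT : IsTwoCNF T) (IH : MinModelBoundBelow T)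
    (hcard : ∀ c ∈ T, c.card = 2) {c : Clause} (hc : c ∈ T) {a : ℕ} (ha : (false, a) ∈ c) :
    MinModelBound T := by
  have haT : a ∈ thAtoms T := snd_mem_thAtoms hc ha
  by_cases hpos : ∃ c' ∈ T, (true, a) ∈ c'
  · obtain ⟨c', hc', ha'⟩ := hpos
    obtain ⟨l, hla, rfl⟩ := (hT.ok c' hc').exists_eq_pair (hcard c' hc') ha'
    obtain ⟨l', hl'a, rfl⟩ := (hT.ok c hc).exists_eq_pair (hcard c hc) ha
    refine minModelBound_of_branching hT IH [{(false, a), l}, {(true, a), l'}] (by simp) ?_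
      (fun M hM => ?_) ?_
    · simp [Finset.insert_subset_iff, haT, snd_mem_thAtoms hc' (Finset.mem_insert_of_mem
        (Finset.mem_singleton_self l)), snd_mem_thAtoms hc (Finset.mem_insert_of_mem
        (Finset.mem_singleton_self l'))]
    · by_cases haM : a ∈ M
      · refine ⟨{(true, a), l'}, by simp, ?_⟩
        simp only [Finset.mem_insert, Finset.mem_singleton, forall_eq_or_imp, forall_eq]
        exact ⟨by simpa [satLit] using haM,
          hM.1.satLit_of_pair_mem hc (by simpa [satLit] using haM)⟩
      · refine ⟨{(false, a), l}, by simp, ?_⟩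
        simp only [Finset.mem_insert, Finset.mem_singleton, forall_eq_or_imp, forall_eq]
        exact ⟨by simpa [satLit] using haM,
          hM.1.satLit_of_pair_mem hc' (by simpa [satLit] using haM)⟩
    · simpa [Finset.card_pair hla.symm, Finset.card_pair hl'a.symm, ← two_mul] using
        two_mul_inv_cubeRootThree_sq_le_one
  · simp only [not_exists, not_and] at hpos
    refine minModelBound_of_branching hT IH [{(false, a)}] (by simp) (by simpa using haT)
      (fun M hM => ⟨_, List.mem_singleton_self _, ?_⟩) (by simpa using inv_cubeRootThree_le_one)
    simp only [Finset.mem_singleton, forall_eq, satLit]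
    intro haM
    obtain ⟨c', hc', hac', -⟩ := hM.exists_witness haM
    exact hpos c' hc' hac'

end Cases

def IsPositiveBinary (T : CTheory) : Prop :=
  ∀ c ∈ T, ∃ x y : ℕ, x ≠ y ∧ c = {(true, x), (true, y)}

def nbrs (T : CTheory) (a : ℕ) : Finset ℕ :=
  (thAtoms T).filter fun b => ({(true, a), (true, b)} : Clause) ∈ T

def notMemPattern (T : CTheory) (a : ℕ) : Finset Lit :=
  insert (false, a) ((nbrs T a).image fun b => (true, b))

lemma isPositiveBinary_of_forall_notMem {T : CTheory} (hcard : ∀ c ∈ T, c.card = 2)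
    (hneg : ∀ c ∈ T, ∀ a, (false, a) ∉ c) : IsPositiveBinary T := by
  intro c hc
  obtain ⟨⟨bu, x⟩, ⟨bw, y⟩, huw, rfl⟩ := Finset.card_eq_two.mp (hcard c hc)
  cases bu
  · exact absurd (by simp) (hneg _ hc x)
  cases bw
  · exact absurd (by simp) (hneg _ hc y)
  exact ⟨x, y, by rintro rfl; exact huw rfl, rfl⟩

section Positive

variable {T : CTheory} {a b : ℕ} {M : Finset ℕ}

lemma mem_nbrs : b ∈ nbrs T a ↔ ({(true, a), (true, b)} : Clause) ∈ T := by
  simp only [nbrs, Finset.mem_filter, and_iff_right_iff_imp]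
  exact fun h => snd_mem_thAtoms (l := (true, b)) h (by simp)

lemma mem_nbrs_comm : b ∈ nbrs T a ↔ a ∈ nbrs T b := by
  rw [mem_nbrs, mem_nbrs, Finset.pair_comm]

lemma nbrs_subset_thAtoms : nbrs T a ⊆ thAtoms T := Finset.filter_subset _ _

lemma isModel.satLit_notMemPattern (hM : isModel M T) (ha : a ∉ M) :
    ∀ l ∈ notMemPattern T a, satLit M l := by
  simp only [notMemPattern, Finset.forall_mem_insert, Finset.forall_mem_image]
  exact ⟨by simpa [satLit] using ha,
    fun b hb => hM.satLit_of_pair_mem (mem_nbrs.mp hb) (by simpa [satLit] using ha)⟩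

lemma image_notMemPattern_subset (ha : a ∈ thAtoms T) :
    (notMemPattern T a).image Prod.snd ⊆ thAtoms T := by
  simp [notMemPattern, Finset.image_insert, Finset.image_image, Finset.insert_subset_iff, ha,
    Function.comp_def, nbrs_subset_thAtoms]

lemma IsPositiveBinary.exists_eq_pair (hpos : IsPositiveBinary T) {c : Clause} (hc : c ∈ T)
    (ha : (true, a) ∈ c) : ∃ b ≠ a, c = {(true, a), (true, b)} := by
  obtain ⟨x, y, hxy, rfl⟩ := hpos c hc
  simp only [Finset.mem_insert, Finset.mem_singleton, Prod.mk.injEq, true_and] at ha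
  rcases ha with rfl | rfl
  · exact ⟨y, hxy.symm, rfl⟩
  · exact ⟨x, hxy, Finset.pair_comm _ _⟩

lemma IsPositiveBinary.notMem_nbrs_self (hpos : IsPositiveBinary T) : a ∉ nbrs T a := by
  intro h
  obtain ⟨b, hba, hc⟩ := hpos.exists_eq_pair (a := a) (mem_nbrs.mp h) (by simp)
  have hb : (true, b) ∈ ({(true, a), (true, a)} : Clause) := hc ▸ by simp
  exact hba (by simpa using hb)

lemma IsPositiveBinary.nbrs_nonempty (hpos : IsPositiveBinary T) (ha : a ∈ thAtoms T) :
    (nbrs T a).Nonempty := by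
  obtain ⟨c, hc, l, hl, rfl⟩ := mem_thAtoms.mp ha
  obtain ⟨x, y, -, rfl⟩ := hpos c hc
  simp only [Finset.mem_insert, Finset.mem_singleton] at hl
  rcases hl with rfl | rfl
  · exact ⟨y, mem_nbrs.mpr hc⟩
  · exact ⟨x, mem_nbrs.mpr (by rwa [Finset.pair_comm])⟩

lemma IsPositiveBinary.exists_mem_nbrs_notMem (hpos : IsPositiveBinary T)
    (hM : isMinModel M T) (ha : a ∈ M) : ∃ b ∈ nbrs T a, b ∉ M := by
  obtain ⟨c, hc, hac, honly⟩ := hM.exists_witness ha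
  obtain ⟨b, hba, rfl⟩ := hpos.exists_eq_pair hc hac
  refine ⟨b, mem_nbrs.mpr hc, fun hbM => hba ?_⟩
  simpa using honly (true, b) (by simp) (by simpa [satLit] using hbM)

lemma IsPositiveBinary.card_image_notMemPattern (hpos : IsPositiveBinary T) :
    ((notMemPattern T a).image Prod.snd).card = (nbrs T a).card + 1 := by
  simp [notMemPattern, Finset.image_insert, Finset.image_image, Function.comp_def,
    Finset.card_insert_of_notMem hpos.notMem_nbrs_self]

lemma minModelBound_of_three_le_card_nbrs (hT : IsTwoCNF T) (IH : MinModelBoundBelow T)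
    (hpos : IsPositiveBinary T) (ha : a ∈ thAtoms T) (h3 : 3 ≤ (nbrs T a).card) :
    MinModelBound T := by
  refine minModelBound_of_branching hT IH [{(true, a)}, notMemPattern T a]
    (by simp [notMemPattern]) (by simp [ha, image_notMemPattern_subset ha]) (fun M hM => ?_) ?_
  · by_cases haM : a ∈ M
    · exact ⟨{(true, a)}, by simp, by simpa [satLit] using haM⟩
    · exact ⟨notMemPattern T a, by simp, hM.1.satLit_notMemPattern haM⟩
  · have hle : cubeRootThree⁻¹ ^ ((nbrs T a).card + 1) ≤ cubeRootThree⁻¹ ^ 4 :=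
      pow_le_pow_of_le_one (inv_pos.mpr cubeRootThree_pos).le inv_cubeRootThree_le_one (by omega)
    simp only [List.map_cons, List.map_nil, List.sum_cons, List.sum_nil, add_zero,
      hpos.card_image_notMemPattern, Finset.image_singleton, Finset.card_singleton, pow_one]
    linarith [inv_cubeRootThree_add_pow_four_le_one]

lemma minModelBound_of_nbrs_eq_singleton (hT : IsTwoCNF T) (IH : MinModelBoundBelow T)
    (hpos : IsPositiveBinary T) (hab : nbrs T a = {b}) : MinModelBound T := by
  have hb : b ∈ nbrs T a := by simp [hab]
  have haT : a ∈ thAtoms T := nbrs_subset_thAtoms (mem_nbrs_comm.mp hb)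
  have hbT : b ∈ thAtoms T := nbrs_subset_thAtoms hb
  refine minModelBound_of_branching hT IH [notMemPattern T a, notMemPattern T b]
    (by simp [notMemPattern])
    (by simp [image_notMemPattern_subset haT, image_notMemPattern_subset hbT])
    (fun M hM => ?_) ?_
  · by_cases haM : a ∈ M
    · obtain ⟨w, hw, hwM⟩ := hpos.exists_mem_nbrs_notMem hM haM
      rw [hab, Finset.mem_singleton] at hw
      subst hw
      exact ⟨notMemPattern T w, by simp, hM.1.satLit_notMemPattern hwM⟩
    · exact ⟨notMemPattern T a, by simp, hM.1.satLit_notMemPattern haM⟩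
  · have hle : cubeRootThree⁻¹ ^ ((nbrs T b).card + 1) ≤ cubeRootThree⁻¹ ^ 2 :=
      pow_le_pow_of_le_one (inv_pos.mpr cubeRootThree_pos).le inv_cubeRootThree_le_one
        (by have := (hpos.nbrs_nonempty hbT).card_pos; omega)
    simp only [List.map_cons, List.map_nil, List.sum_cons, List.sum_nil, add_zero,
      hpos.card_image_notMemPattern, hab, Finset.card_singleton]
    linarith [two_mul_inv_cubeRootThree_sq_le_one]

lemma minModelBound_of_nbrs_eq_pair (hT : IsTwoCNF T) (IH : MinModelBoundBelow T)
    (hpos : IsPositiveBinary T) {c : ℕ} (habc : nbrs T a = {b, c}) (hbc : b ≠ c)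
    (hb2 : 2 ≤ (nbrs T b).card) : MinModelBound T := by
  have hb : b ∈ nbrs T a := by simp [habc]
  have hc : c ∈ nbrs T a := by simp [habc]
  have haT : a ∈ thAtoms T := nbrs_subset_thAtoms (mem_nbrs_comm.mp hb)
  have hbT : b ∈ thAtoms T := nbrs_subset_thAtoms hb
  have hab : a ≠ b := by rintro rfl; exact hpos.notMem_nbrs_self hb
  have hac : a ≠ c := by rintro rfl; exact hpos.notMem_nbrs_self hc
  refine minModelBound_of_branching hT IH
    [notMemPattern T a, notMemPattern T b, {(true, a), (true, b), (false, c)}]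
    (by simp [notMemPattern])
    (by simp [image_notMemPattern_subset haT, image_notMemPattern_subset hbT,
      Finset.insert_subset_iff, haT, hbT, nbrs_subset_thAtoms hc])
    (fun M hM => ?_) ?_
  · by_cases haM : a ∈ M
    · by_cases hbM : b ∈ M
      · obtain ⟨w, hw, hwM⟩ := hpos.exists_mem_nbrs_notMem hM haM
        rw [habc, Finset.mem_insert, Finset.mem_singleton] at hw
        rcases hw with rfl | rfl
        · exact absurd hbM hwM
        · exact ⟨{(true, a), (true, b), (false, w)}, by simp, by simp [satLit, haM, hbM, hwM]⟩
      · exact ⟨notMemPattern T b, by simp, hM.1.satLit_notMemPattern hbM⟩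
    · exact ⟨notMemPattern T a, by simp, hM.1.satLit_notMemPattern haM⟩
  · have hle : cubeRootThree⁻¹ ^ ((nbrs T b).card + 1) ≤ cubeRootThree⁻¹ ^ 3 :=
      pow_le_pow_of_le_one (inv_pos.mpr cubeRootThree_pos).le inv_cubeRootThree_le_one (by omega)
    have habc3 : (({(true, a), (true, b), (false, c)} : Finset Lit).image Prod.snd).card = 3 := by
      simp [Finset.card_insert_of_notMem, hab, hac, hbc]
    simp only [List.map_cons, List.map_nil, List.sum_cons, List.sum_nil, add_zero,
      hpos.card_image_notMemPattern, habc, habc3, Finset.card_pair hbc]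
    linarith [inv_cubeRootThree_pow_three]

lemma minModelBound_of_isPositiveBinary (hT : IsTwoCNF T) (IH : MinModelBoundBelow T)
    (hpos : IsPositiveBinary T) (hne : (thAtoms T).Nonempty) : MinModelBound T := by
  by_cases h3 : ∃ a ∈ thAtoms T, 3 ≤ (nbrs T a).card
  · obtain ⟨a, ha, h3⟩ := h3
    exact minModelBound_of_three_le_card_nbrs hT IH hpos ha h3
  by_cases h1 : ∃ a ∈ thAtoms T, (nbrs T a).card = 1
  · obtain ⟨a, -, h1⟩ := h1
    obtain ⟨b, hab⟩ := Finset.card_eq_one.mp h1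
    exact minModelBound_of_nbrs_eq_singleton hT IH hpos hab
  simp only [not_exists, not_and, not_le] at h3 h1
  have h2 : ∀ a ∈ thAtoms T, (nbrs T a).card = 2 := fun a ha => by
    have := (hpos.nbrs_nonempty ha).card_pos
    have := h3 a ha
    have := h1 a ha
    omega
  obtain ⟨a, ha⟩ := hne
  obtain ⟨b, c, hbc, habc⟩ := Finset.card_eq_two.mp (h2 a ha)
  have hbT : b ∈ thAtoms T := nbrs_subset_thAtoms (show b ∈ nbrs T a by simp [habc])
  exact minModelBound_of_nbrs_eq_pair hT IH hpos habc hbc (h2 b hbT).ge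

end Positive

theorem minModelBound_of_minModelBoundBelow {T : CTheory} (hT : IsTwoCNF T)
    (IH : MinModelBoundBelow T) : MinModelBound T := by
  by_cases hempty : (∅ : Clause) ∈ T
  · exact minModelBound_of_empty_mem hempty
  by_cases hunit : ∃ l : Lit, ({l} : Clause) ∈ T
  · obtain ⟨l, hl⟩ := hunit
    exact minModelBound_of_singleton_mem hT IH hl
  have hcard : ∀ c ∈ T, c.card = 2 := fun c hc => by
    have h0 : c.card ≠ 0 := fun h => hempty (Finset.card_eq_zero.mp h ▸ hc)
    have h1 : c.card ≠ 1 := fun h => by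
      obtain ⟨l, rfl⟩ := Finset.card_eq_one.mp h
      exact hunit ⟨l, hc⟩
    have := hT.card_le_two c hc
    omega
  by_cases hneg : ∃ c ∈ T, ∃ a, (false, a) ∈ c
  · obtain ⟨c, hc, a, ha⟩ := hneg
    exact minModelBound_of_neg_mem hT IH hcard hc ha
  simp only [not_exists, not_and] at hneg
  rcases (thAtoms T).eq_empty_or_nonempty with hAt | hAt
  · exact minModelBound_of_thAtoms_eq_empty hAt
  · exact minModelBound_of_isPositiveBinary hT IH
      (isPositiveBinary_of_forall_notMem hcard hneg) hAt

theorem IsTwoCNF.minModelBound {T : CTheory} (hT : IsTwoCNF T) : MinModelBound T :=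
  minModelBound_of_minModelBoundBelow hT fun T' hT' _ => hT'.minModelBound
termination_by (thAtoms T).card

/-- Every 2-CNF theory `T` with `n = |At(T)|` atoms has at most `3^(n/3)` minimal models. -/
theorem two_cnf_minimal_models_bound (T : CTheory)
    (hok : ∀ c ∈ T, Clause.ok c) (h2 : ∀ c ∈ T, c.card ≤ 2) :
    (({M : Finset ℕ | isMinModel M T}.ncard : ℝ)) ≤
      (3 : ℝ) ^ (((thAtoms T).card : ℝ) / 3) := by
  have h := (IsTwoCNF.mk hok h2).minModelBound
  rwa [MinModelBound, cubeRootThree, ← Real.rpow_natCast, ← Real.rpow_mul (by norm_num),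
    one_div_mul_eq_div] at h
end

section
/- Let 𝒯 be a finite rooted tree, let N ≥ 0 and τ₀ ≥ 1 be real numbers, and let μ be a function assigning to each node of 𝒯 a nonnegative real number, with μ(root) ≤ N, such that for every internal node x of 𝒯, the sum over the children y of x of τ₀^(μ(y) − μ(x)) is at most 1. Then the number of leaves of 𝒯 is at most τ₀^N. -/
/-!
Every leaf below a node `x` is `x` itself or lies below a child of `x`. Hence, by well-founded
induction from the leaves up, the number of leaves below `x` is at most `τ₀ ^ μ x`: at a leaf it
is `1 ≤ τ₀ ^ μ x`, and at an internal node it is at most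
`∑ y, τ₀ ^ μ y = τ₀ ^ μ x * ∑ y, τ₀ ^ (μ y - μ x) ≤ τ₀ ^ μ x`.
The child relation is well founded because the distance to the root grows along it.
-/

open Classical Finset Relation

section LeafCount

variable {V : Type*} [Fintype V] (child : V → V → Prop)

noncomputable def leavesBelow (x : V) : Finset V :=
  univ.filter fun v => (¬ ∃ y, child y v) ∧ ReflTransGen child v x

variable {child}

lemma leavesBelow_subset_singleton {x : V} (hx : ¬ ∃ y, child y x) :
    leavesBelow child x ⊆ {x} := by
  intro v hv
  simp only [leavesBelow, mem_filter, mem_univ, true_and] at hv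
  rcases ReflTransGen.cases_tail hv.2 with hxv | ⟨y, -, hyx⟩
  · exact mem_singleton.2 hxv.symm
  · exact absurd ⟨y, hyx⟩ hx

lemma leavesBelow_subset_biUnion {x : V} (hx : ∃ y, child y x) :
    leavesBelow child x ⊆ (univ.filter (child · x)).biUnion (leavesBelow child) := by
  intro v hv
  simp only [leavesBelow, mem_filter, mem_univ, true_and] at hv
  rcases ReflTransGen.cases_tail hv.2 with rfl | ⟨y, hvy, hyx⟩
  · exact absurd hx hv.1
  · simp only [mem_biUnion, mem_filter, mem_univ, true_and, leavesBelow]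
    exact ⟨y, hyx, hv.1, hvy⟩

theorem card_leavesBelow_le (hwf : WellFounded child) (w : V → ℝ)
    (hleaf : ∀ x, (¬ ∃ y, child y x) → 1 ≤ w x)
    (hnode : ∀ x, (∃ y, child y x) → ∑ y ∈ univ.filter (child · x), w y ≤ w x) (x : V) :
    ((leavesBelow child x).card : ℝ) ≤ w x := by
  induction x using hwf.induction with
  | _ x ih =>
  by_cases hx : ∃ y, child y x
  · calc ((leavesBelow child x).card : ℝ)
        ≤ ∑ y ∈ univ.filter (child · x), ((leavesBelow child y).card : ℝ) := by
          exact_mod_cast (card_le_card (leavesBelow_subset_biUnion hx)).trans card_biUnion_le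
      _ ≤ ∑ y ∈ univ.filter (child · x), w y :=
          sum_le_sum fun y hy => ih y (mem_filter.1 hy).2
      _ ≤ w x := hnode x hx
  · calc ((leavesBelow child x).card : ℝ) ≤ 1 := by
          exact_mod_cast (card_le_card (leavesBelow_subset_singleton hx)).trans
            (card_singleton x).le
      _ ≤ w x := hleaf x hx

end LeafCount

section ParentFunction

variable {V : Type*} {root : V} {parent : V → V}

lemma find_lt_find_of_parent_eq (hreach : ∀ v, ∃ n, parent^[n] v = root) {x y : V}
    (hy : y ≠ root) (hyx : parent y = x) : Nat.find (hreach x) < Nat.find (hreach y) := by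
  obtain ⟨k, hk⟩ : ∃ k, Nat.find (hreach y) = k + 1 :=
    Nat.exists_eq_succ_of_ne_zero fun h => hy (by simpa [h] using Nat.find_spec (hreach y))
  have hkx : parent^[k] x = root := by
    rw [← hyx, ← Function.iterate_succ_apply, Nat.succ_eq_add_one, ← hk]
    exact Nat.find_spec (hreach y)
  rw [hk]
  exact Nat.lt_succ_of_le (Nat.find_min' _ hkx)

lemma wellFounded_child [Finite V] (hreach : ∀ v, ∃ n, parent^[n] v = root) :
    WellFounded fun y x => y ≠ root ∧ parent y = x :=
  Subrelation.wf (fun h => find_lt_find_of_parent_eq hreach h.1 h.2)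
    (Finite.wellFounded_of_trans_of_irrefl (InvImage (· > ·) fun v => Nat.find (hreach v)))

lemma reflTransGen_child_root {v : V} {n : ℕ} (hn : parent^[n] v = root) :
    ReflTransGen (fun y x => y ≠ root ∧ parent y = x) v root := by
  induction n generalizing v with
  | zero => rw [← hn]; exact ReflTransGen.refl
  | succ n ih =>
    by_cases hv : v = root
    · rw [hv]
    · exact ReflTransGen.head ⟨hv, rfl⟩ (ih hn)

end ParentFunction

theorem leaf_bound_of_measure_general (V : Type*) [Fintype V] (root : V) (parent : V → V)
    (hreach : ∀ v : V, ∃ n : ℕ, parent^[n] v = root)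
    (N τ₀ : ℝ) (hτ : 1 ≤ τ₀)
    (μ : V → ℝ) (hμ : ∀ v : V, 0 ≤ μ v) (hμroot : μ root ≤ N)
    (hsum : ∀ x : V, (∃ v : V, v ≠ root ∧ parent v = x) →
      ∑ y ∈ Finset.univ.filter (fun y : V => y ≠ root ∧ parent y = x),
        τ₀ ^ (μ y - μ x) ≤ 1) :
    ((Finset.univ.filter (fun u : V => ¬ ∃ v : V, v ≠ root ∧ parent v = u)).card : ℝ) ≤
      τ₀ ^ N := by
  have hτ₀ : 0 < τ₀ := zero_lt_one.trans_le hτ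
  have hnode (x : V) (hx : ∃ v, v ≠ root ∧ parent v = x) :
      ∑ y ∈ univ.filter (fun y => y ≠ root ∧ parent y = x), τ₀ ^ μ y ≤ τ₀ ^ μ x := by
    calc ∑ y ∈ univ.filter (fun y => y ≠ root ∧ parent y = x), τ₀ ^ μ y
        = τ₀ ^ μ x *
            ∑ y ∈ univ.filter (fun y => y ≠ root ∧ parent y = x), τ₀ ^ (μ y - μ x) := by
          rw [mul_sum]
          refine sum_congr rfl fun y _ => ?_
          rw [← Real.rpow_add hτ₀, add_sub_cancel]
      _ ≤ τ₀ ^ μ x := mul_le_of_le_one_right (Real.rpow_nonneg hτ₀.le _) (hsum x hx)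
  have hleaves : univ.filter (fun u => ¬ ∃ v, v ≠ root ∧ parent v = u) =
      leavesBelow (fun y x => y ≠ root ∧ parent y = x) root := by
    ext u
    simp only [leavesBelow, mem_filter, mem_univ, true_and, iff_self_and]
    exact fun _ => reflTransGen_child_root (hreach u).choose_spec
  rw [hleaves]
  calc _ ≤ τ₀ ^ μ root := card_leavesBelow_le (wellFounded_child hreach) (fun x => τ₀ ^ μ x)
          (fun x _ => Real.one_le_rpow hτ (hμ x)) (fun x hx => by convert hnode x hx) root
    _ ≤ τ₀ ^ N := Real.rpow_le_rpow_of_exponent_le hτ hμroot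

/-- Let `𝒯` be a finite rooted tree (nodes `V`, root, parent function), `N ≥ 0`, `τ₀ ≥ 1`, and
`μ` a nonnegative real-valued function on nodes with `μ(root) ≤ N` such that for every internal
node `x`, `∑_{y child of x} τ₀^(μ(y) − μ(x)) ≤ 1`. Then the number of leaves is at most `τ₀^N`. -/
theorem leaf_bound_of_measure (V : Type*) [Fintype V] (root : V) (parent : V → V)
    (hroot : parent root = root)
    (hreach : ∀ v : V, ∃ n : ℕ, parent^[n] v = root)
    (N τ₀ : ℝ) (hN : 0 ≤ N) (hτ : 1 ≤ τ₀)
    (μ : V → ℝ) (hμ : ∀ v : V, 0 ≤ μ v) (hμroot : μ root ≤ N)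
    (hsum : ∀ x : V, (∃ v : V, v ≠ root ∧ parent v = x) →
      ∑ y ∈ Finset.univ.filter (fun y : V => y ≠ root ∧ parent y = x),
        τ₀ ^ (μ y - μ x) ≤ 1) :
    ((Finset.univ.filter (fun u : V => ¬ ∃ v : V, v ≠ root ∧ parent v = u)).card : ℝ) ≤
      τ₀ ^ N :=
  leaf_bound_of_measure_general V root parent hreach N τ₀ hτ μ hμ hμroot hsum
end

section
/- Let T be a 2-CNF theory each of whose clauses is of the form {a}, {a, b}, or {a, ¬b} for distinct atoms a and b, and let G be the directed graph with vertex set At(T) having a directed edge (a, b) whenever {¬a, b} ∈ T. Then At(T) is a model of T, and At(T) is a minimal model of T if and only if every 0-rank strongly connected component C of G contains all atoms of at least one positive clause of T. -/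
open Classical

/-- The directed graph `G` on `At(T)`: an edge `(a, b)` whenever `{¬a, b} ∈ T`. -/
def edgeRel (T : CTheory) (a b : ℕ) : Prop :=
  ({((false, a) : Lit), ((true, b) : Lit)} : Clause) ∈ T

/-- Reachability in `G` by directed paths (every vertex reachable from itself). -/
def reach (T : CTheory) : ℕ → ℕ → Prop := Relation.ReflTransGen (edgeRel T)

/-- A strongly connected component of `G`: a maximal set of vertices any two of which are
reachable from each other. -/
def isSCC (T : CTheory) (C : Set ℕ) : Prop :=
  C.Nonempty ∧ C ⊆ ↑(thAtoms T) ∧ (∀ a ∈ C, ∀ b ∈ C, reach T a b) ∧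
    ∀ C' : Set ℕ, C ⊆ C' → C' ⊆ ↑(thAtoms T) →
      (∀ a ∈ C', ∀ b ∈ C', reach T a b) → C' = C

/-- `C` has 0-rank: there is no edge `(a, b)` of `G` with `a ∉ C` and `b ∈ C`. -/
def zeroRank (T : CTheory) (C : Set ℕ) : Prop :=
  ∀ a b : ℕ, edgeRel T a b → b ∈ C → a ∈ C

/-!
Every model of `T` is closed under reachability in `G`, since an edge `(a, b)` is the clause
`a → b`. If `M' ⊊ At(T)` is a model and `x ∉ M'`, an ancestor `y` of `x` with the fewest
ancestors spans a 0-rank component `C` all of whose atoms reach `x`, so `C` is disjoint from `M'`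
and no positive clause inside `C` is satisfied by `M'`. Conversely, if a 0-rank component `C`
contains no positive clause, then `At(T) \ C` is still a model: the clauses `{a, ¬b}` survive
because no edge enters `C` from outside.
-/

open Finset

def isRestricted2CNF (T : CTheory) : Prop :=
  ∀ c ∈ T,
    (∃ a : ℕ, c = ({((true, a) : Lit)} : Clause)) ∨
    (∃ a b : ℕ, a ≠ b ∧ c = ({((true, a) : Lit), ((true, b) : Lit)} : Clause)) ∨
    (∃ a b : ℕ, a ≠ b ∧ c = ({((true, a) : Lit), ((false, b) : Lit)} : Clause))

variable {T : CTheory}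

lemma mem_thAtoms_of_mem {c : Clause} (hc : c ∈ T) {l : Lit} (hl : l ∈ c) : l.2 ∈ thAtoms T :=
  mem_sup.2 ⟨c, hc, mem_image.2 ⟨l, hl, rfl⟩⟩

lemma edgeRel.left_mem_thAtoms {a b : ℕ} (h : edgeRel T a b) : a ∈ thAtoms T :=
  mem_thAtoms_of_mem (l := (false, a)) h (by simp)

lemma isModel_thAtoms (hpos : ∀ c ∈ T, ∃ a, ((true, a) : Lit) ∈ c) : isModel (thAtoms T) T :=
  fun c hc ↦
    let ⟨a, ha⟩ := hpos c hc
    ⟨(true, a), ha, by simpa [satLit] using mem_thAtoms_of_mem hc ha⟩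

lemma isModel.mem_of_reach {M : Finset ℕ} (hM : isModel M T) {z w : ℕ} (hz : z ∈ M)
    (h : reach T z w) : w ∈ M := by
  induction h with
  | refl => exact hz
  | tail _ hedge ih =>
    obtain ⟨l, hl, hsat⟩ := hM _ hedge
    rcases mem_insert.1 hl with rfl | hl
    · exact absurd ih (by simpa [satLit] using hsat)
    · rw [mem_singleton.1 hl] at hsat
      simpa [satLit] using hsat

noncomputable def ancestors (T : CTheory) (w : ℕ) : Finset ℕ := (thAtoms T).filter (reach T · w)

lemma mem_ancestors {z w : ℕ} : z ∈ ancestors T w ↔ z ∈ thAtoms T ∧ reach T z w :=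
  mem_filter

lemma ancestors_mono {z w : ℕ} (h : reach T z w) : ancestors T z ⊆ ancestors T w :=
  fun _ hu ↦ mem_ancestors.2 ⟨(mem_ancestors.1 hu).1, (mem_ancestors.1 hu).2.trans h⟩

lemma zeroRank_ancestors (w : ℕ) : zeroRank T ↑(ancestors T w) := fun _ _ hedge hb ↦
  mem_ancestors.2 ⟨hedge.left_mem_thAtoms, .head hedge (mem_ancestors.1 hb).2⟩

lemma isSCC_ancestors {w : ℕ} (hw : w ∈ thAtoms T)
    (hback : ∀ z ∈ ancestors T w, reach T w z) : isSCC T ↑(ancestors T w) := by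
  have hwC : w ∈ ancestors T w := mem_ancestors.2 ⟨hw, .refl⟩
  refine ⟨⟨w, hwC⟩, fun z hz ↦ (mem_ancestors.1 hz).1,
    fun a ha b hb ↦ (mem_ancestors.1 ha).2.trans (hback b hb), fun C' hC hC'A hconn ↦ ?_⟩
  exact Set.Subset.antisymm (fun z hz ↦ mem_ancestors.2 ⟨hC'A hz, hconn z hz w (hC hwC)⟩) hC

/-- An ancestor `y` of `x` with the fewest ancestors is reachable from each of its ancestors `z`,
because `z` then has the same ancestors as `y`. -/
lemma exists_ancestor_reach_ancestors {x : ℕ} (hx : x ∈ thAtoms T) :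
    ∃ y ∈ ancestors T x, ∀ z ∈ ancestors T y, reach T y z := by
  obtain ⟨y, hy, hmin⟩ :=
    exists_min_image (ancestors T x) (fun w ↦ #(ancestors T w)) ⟨x, mem_ancestors.2 ⟨hx, .refl⟩⟩
  refine ⟨y, hy, fun z hz ↦ ?_⟩
  have hzy := (mem_ancestors.1 hz).2
  have heq : ancestors T z = ancestors T y :=
    eq_of_subset_of_card_le (ancestors_mono hzy)
      (hmin z (ancestors_mono (mem_ancestors.1 hy).2 hz))
  exact (mem_ancestors.1 (heq ▸ mem_ancestors.2 ⟨(mem_ancestors.1 hy).1, .refl⟩)).2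

lemma exists_isSCC_zeroRank_reach {x : ℕ} (hx : x ∈ thAtoms T) :
    ∃ C, isSCC T C ∧ zeroRank T C ∧ ∀ z ∈ C, reach T z x := by
  obtain ⟨y, hy, hback⟩ := exists_ancestor_reach_ancestors hx
  rw [mem_ancestors] at hy
  exact ⟨_, isSCC_ancestors hy.1 hback, zeroRank_ancestors y,
    fun z hz ↦ (mem_ancestors.1 hz).2.trans hy.2⟩

lemma isRestricted2CNF.exists_pos (hT : isRestricted2CNF T) :
    ∀ c ∈ T, ∃ a, ((true, a) : Lit) ∈ c := by
  intro c hc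
  rcases hT c hc with ⟨a, rfl⟩ | ⟨a, b, -, rfl⟩ | ⟨a, b, -, rfl⟩ <;> exact ⟨a, by simp⟩

lemma isModel_filter_notMem_of_zeroRank (hT : isRestricted2CNF T) {C : Set ℕ} (hC : zeroRank T C)
    (hno : ∀ c ∈ T, (∀ l ∈ c, l.1 = true) → ∃ l ∈ c, l.2 ∉ C) :
    isModel ((thAtoms T).filter (· ∉ C)) T := by
  intro c hc
  by_cases hpos : ∀ l ∈ c, l.1 = true
  · obtain ⟨l, hl, hlC⟩ := hno c hc hpos
    exact ⟨l, hl, by simpa [satLit, hpos l hl] using ⟨mem_thAtoms_of_mem hc hl, hlC⟩⟩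
  obtain ⟨a, b, -, rfl⟩ : ∃ a b : ℕ, a ≠ b ∧ c = {(true, a), (false, b)} := by
    rcases hT c hc with ⟨a, rfl⟩ | ⟨a, b, -, rfl⟩ | h
    all_goals first | exact h | simp at hpos
  by_cases hb : b ∈ thAtoms T ∧ b ∉ C
  · have hedge : edgeRel T b a := by rw [edgeRel, pair_comm]; exact hc
    refine ⟨(true, a), by simp, ?_⟩
    simpa [satLit] using ⟨mem_thAtoms_of_mem hc (l := (true, a)) (by simp),
      fun ha ↦ hb.2 (hC b a hedge ha)⟩
  · exact ⟨(false, b), by simp, by simpa [satLit] using hb⟩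

/-- Let `T` be a 2-CNF theory whose clauses have the form `{a}`, `{a, b}` or `{a, ¬b}` for
distinct atoms `a`, `b`, and let `G` be the directed graph on `At(T)` with an edge `(a, b)`
whenever `{¬a, b} ∈ T`. Then `At(T)` is a model of `T`, and `At(T)` is a minimal model of `T`
iff every 0-rank strongly connected component of `G` contains all atoms of at least one
positive clause of `T`. -/
theorem atoms_minModel_iff_scc (T : CTheory)
    (hform : ∀ c ∈ T,
      (∃ a : ℕ, c = ({((true, a) : Lit)} : Clause)) ∨
      (∃ a b : ℕ, a ≠ b ∧ c = ({((true, a) : Lit), ((true, b) : Lit)} : Clause)) ∨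
      (∃ a b : ℕ, a ≠ b ∧ c = ({((true, a) : Lit), ((false, b) : Lit)} : Clause))) :
    isModel (thAtoms T) T ∧
    (isMinModel (thAtoms T) T ↔
      ∀ C : Set ℕ, isSCC T C → zeroRank T C →
        ∃ c ∈ T, (∀ l ∈ c, l.1 = true) ∧ ∀ l ∈ c, l.2 ∈ C) := by
  have hT : isRestricted2CNF T := hform
  have hmodel := isModel_thAtoms hT.exists_pos
  refine ⟨hmodel, fun ⟨_, _, hmin⟩ C hC h0 ↦ ?_, fun H ↦ ⟨hmodel, subset_rfl, fun M hM hmod ↦ ?_⟩⟩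
  · by_contra! hno
    obtain ⟨y, hy⟩ := hC.1
    exact hmin _ (filter_ssubset.2 ⟨y, hC.2.1 hy, not_not.2 hy⟩)
      (isModel_filter_notMem_of_zeroRank hT h0 hno)
  · obtain ⟨x, hxA, hxM⟩ := exists_of_ssubset hM
    obtain ⟨C, hC, h0, hreach⟩ := exists_isSCC_zeroRank_reach hxA
    obtain ⟨c, hc, hpos, hcC⟩ := H C hC h0
    obtain ⟨l, hl, hsat⟩ := hmod c hc
    have hlM : l.2 ∈ M := by simpa [satLit, hpos l hl] using hsat
    exact hxM (hmod.mem_of_reach hlM (hreach _ (hcC l hl)))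
end

section
/- For every integer t ≥ 2 there exist positive real constants d_t, D_t and D'_t such that for every integer n ≥ 2t − 1 there is a t-CNF theory T with exactly n atoms whose size m (the total number of occurrences of literals in the clauses of T) satisfies m ≤ d_t·n, whose number of minimal models is at least D_t·μ_t^n, and such that the sum of the cardinalities of the minimal models of T is at least D'_t·n·μ_t^n, where μ_t = C(2t−1, t)^(1/(2t−1)) and C(·,·) denotes the binomial coefficient. -/
open Classical

/-
Cut the atoms `0, …, n - 1` into `⌊n / (2t - 1)⌋` consecutive blocks of `2t - 1` atoms and a
leftover of fewer than `2t - 1` atoms. Take as clauses all positive `t`-clauses inside each block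
and the unit clause of each leftover atom. A set of atoms satisfies the clauses of a block iff it
misses at most `t - 1` of its atoms, so choosing `t` atoms in every block, together with all
leftover atoms, gives a minimal model. There are `C(2t-1, t)^⌊n/(2t-1)⌋ ≥ C(2t-1, t)⁻¹ μ_t^n` such
choices, every model has at least `t ⌊n/(2t-1)⌋ ≥ n / 4` atoms, and the theory has at most
`(C(2t-1, t) + 1) t n` literal occurrences.
-/

open Finset

def posClause (S : Finset ℕ) : Clause := S.image fun a => (true, a)

lemma posClause_ok (S : Finset ℕ) : (posClause S).ok := by
  rintro a ⟨-, h⟩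
  simp [posClause] at h

lemma card_posClause (S : Finset ℕ) : #(posClause S) = #S :=
  card_image_of_injective _ fun a b h => by simpa using h

lemma clauseAtoms_posClause (S : Finset ℕ) : clauseAtoms (posClause S) = S := by
  simp [clauseAtoms, posClause, image_image]

lemma thAtoms_image_posClause (𝒮 : Finset (Finset ℕ)) :
    thAtoms (𝒮.image posClause) = 𝒮.sup id := by
  rw [thAtoms, sup_image]
  exact sup_congr rfl fun S _ => clauseAtoms_posClause S

lemma isModel_image_posClause_iff {M : Finset ℕ} {𝒮 : Finset (Finset ℕ)} :
    isModel M (𝒮.image posClause) ↔ ∀ S ∈ 𝒮, ∃ a ∈ S, a ∈ M := by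
  simp [isModel, posClause, satLit]

lemma forall_mem_powersetCard_exists_mem_iff {α : Type*} [DecidableEq α] {B M : Finset α}
    {s : ℕ} : (∀ S ∈ B.powersetCard s, ∃ a ∈ S, a ∈ M) ↔ #(B \ M) < s := by
  constructor
  · intro h
    by_contra! hs
    obtain ⟨S, hSB, hS⟩ := exists_subset_card_eq hs
    obtain ⟨a, haS, haM⟩ := h S (mem_powersetCard.2 ⟨hSB.trans sdiff_subset, hS⟩)
    exact (mem_sdiff.1 (hSB haS)).2 haM
  · intro h S hS
    rw [mem_powersetCard] at hS
    by_contra! hSM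
    have hSBM : S ⊆ B \ M := fun a ha => mem_sdiff.2 ⟨hS.1 ha, hSM a ha⟩
    exact (card_le_card hSBM).not_gt (hS.2 ▸ h)

section Models

variable {M : Finset ℕ} {T : CTheory}

lemma isModel.inter_thAtoms (h : isModel M T) : isModel (M ∩ thAtoms T) T := by
  intro c hc
  obtain ⟨l, hl, hsat⟩ := h c hc
  refine ⟨l, hl, ?_⟩
  have hlT : l.2 ∈ thAtoms T :=
    mem_sup.2 ⟨c, hc, mem_image_of_mem Prod.snd hl⟩
  by_cases hpos : l.1 <;> simp_all [satLit]

lemma isMinModel_of_forall_ssubset (h : isModel M T) (hmin : ∀ M' ⊂ M, ¬ isModel M' T) :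
    isMinModel M T := by
  refine ⟨h, ?_, hmin⟩
  by_contra hM
  exact hmin _ (ssubset_of_subset_not_subset inter_subset_left fun hsub =>
    hM fun a ha => (mem_inter.1 (hsub ha)).2) h.inter_thAtoms

noncomputable def minModels (T : CTheory) : Finset (Finset ℕ) :=
  (thAtoms T).powerset.filter fun M => isMinModel M T

lemma card_mul_le_sum_card_minModels {m : ℕ} (h : ∀ M, isModel M T → m ≤ #M) :
    #(minModels T) * m ≤ ∑ M ∈ minModels T, #M := by
  rw [← smul_eq_mul]
  exact card_nsmul_le_sum _ _ _ fun M hM => h M (mem_filter.1 hM).2.1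

end Models

section BlockTheory

variable {ι : Type*} [Fintype ι] (B : ι → Finset ℕ) (s : ι → ℕ)

def blockTheory : CTheory := (univ.biUnion fun i => (B i).powersetCard (s i)).image posClause

variable {B s}

lemma isModel_blockTheory_iff {M : Finset ℕ} :
    isModel M (blockTheory B s) ↔ ∀ i, #(B i \ M) < s i := by
  simp only [blockTheory, isModel_image_posClause_iff, mem_biUnion, mem_univ, true_and]
  exact ⟨fun h i => forall_mem_powersetCard_exists_mem_iff.1 fun S hS => h S ⟨i, hS⟩,
    fun h S ⟨i, hS⟩ => forall_mem_powersetCard_exists_mem_iff.2 (h i) S hS⟩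

lemma ok_of_mem_blockTheory {c : Clause} (hc : c ∈ blockTheory B s) : c.ok := by
  obtain ⟨S, -, rfl⟩ := mem_image.1 hc
  exact posClause_ok S

lemma card_le_of_mem_blockTheory {t : ℕ} (hs : ∀ i, s i ≤ t) {c : Clause}
    (hc : c ∈ blockTheory B s) : #c ≤ t := by
  obtain ⟨S, hS, rfl⟩ := mem_image.1 hc
  obtain ⟨i, -, hSi⟩ := mem_biUnion.1 hS
  rw [card_posClause, (mem_powersetCard.1 hSi).2]
  exact hs i

lemma thAtoms_blockTheory (hs_pos : ∀ i, 0 < s i) (hs_le : ∀ i, (B i).Nonempty → s i ≤ #(B i)) :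
    thAtoms (blockTheory B s) = univ.biUnion B := by
  rw [blockTheory, thAtoms_image_posClause, sup_biUnion, sup_eq_biUnion]
  refine biUnion_congr rfl fun i _ => ?_
  rcases (B i).eq_empty_or_nonempty with hB | hB
  · rw [hB, powersetCard_eq_empty.2 (by simpa using hs_pos i)]
    rfl
  · obtain ⟨r, hr⟩ := Nat.exists_eq_add_one_of_ne_zero (hs_pos i).ne'
    have hrB := hs_le i hB
    rw [hr] at hrB ⊢
    exact powersetCard_sup _ _ hrB

lemma sum_card_blockTheory_le {t : ℕ} (hs : ∀ i, s i ≤ t) :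
    ∑ c ∈ blockTheory B s, #c ≤ (∑ i, (#(B i)).choose (s i)) * t := by
  calc ∑ c ∈ blockTheory B s, #c ≤ #(blockTheory B s) * t :=
        sum_le_card_nsmul _ _ _ fun c hc => card_le_of_mem_blockTheory hs hc
    _ ≤ (∑ i, (#(B i)).choose (s i)) * t := by
        gcongr
        calc #(blockTheory B s) ≤ #(univ.biUnion fun i => (B i).powersetCard (s i)) :=
              card_image_le
          _ ≤ ∑ i, #((B i).powersetCard (s i)) := card_biUnion_le
          _ = ∑ i, (#(B i)).choose (s i) := by simp only [card_powersetCard]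

variable (hB : Pairwise (Function.onFun Disjoint B))
include hB

lemma biUnion_inter_eq {f : ι → Finset ℕ} (hf : ∀ i, f i ⊆ B i) (i : ι) :
    univ.biUnion f ∩ B i = f i := by
  ext a
  simp only [mem_inter, mem_biUnion, mem_univ, true_and]
  refine ⟨fun ⟨⟨j, hj⟩, ha⟩ => ?_, fun ha => ⟨⟨i, ha⟩, hf i ha⟩⟩
  obtain rfl : j = i := by_contra fun hji => disjoint_left.1 (hB hji) (hf j hj) ha
  exact hj

lemma sum_le_card_of_isModel_blockTheory {M : Finset ℕ} (hM : isModel M (blockTheory B s)) :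
    ∑ i, (#(B i) + 1 - s i) ≤ #M := by
  rw [isModel_blockTheory_iff] at hM
  calc ∑ i, (#(B i) + 1 - s i) ≤ ∑ i, #(M ∩ B i) := sum_le_sum fun i _ => by
        have := card_sdiff_add_card_inter (B i) M
        rw [inter_comm] at this
        have := hM i
        omega
    _ = #(univ.biUnion fun i => M ∩ B i) :=
        (card_biUnion fun i _ j _ hij => (hB hij).mono inter_subset_right inter_subset_right).symm
    _ ≤ #M := card_le_card (biUnion_subset.2 fun i _ => inter_subset_left)

lemma isMinModel_biUnion_blockTheory (hs_pos : ∀ i, 0 < s i) {f : ι → Finset ℕ}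
    (hf : ∀ i, f i ∈ (B i).powersetCard (#(B i) + 1 - s i)) :
    isMinModel (univ.biUnion f) (blockTheory B s) := by
  have hfB i : f i ⊆ B i := (mem_powersetCard.1 (hf i)).1
  have hcard i : #(B i \ univ.biUnion f) + (#(B i) + 1 - s i) = #(B i) := by
    rw [← (mem_powersetCard.1 (hf i)).2, ← biUnion_inter_eq hB hfB, inter_comm]
    exact card_sdiff_add_card_inter _ _
  refine isMinModel_of_forall_ssubset
    (isModel_blockTheory_iff.2 fun i => by have := hcard i; have := hs_pos i; omega)
    fun M' hM' hmodel => ?_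
  obtain ⟨a, haM, haM'⟩ := exists_of_ssubset hM'
  obtain ⟨i, -, hai⟩ := mem_biUnion.1 haM
  have hsub : insert a (B i \ univ.biUnion f) ⊆ B i \ M' :=
    insert_subset (mem_sdiff.2 ⟨hfB i hai, haM'⟩) (sdiff_subset_sdiff subset_rfl hM'.subset)
  have hlt := card_le_card hsub
  rw [card_insert_of_notMem fun h => (mem_sdiff.1 h).2 haM] at hlt
  have hfi : 0 < #(B i) + 1 - s i := (mem_powersetCard.1 (hf i)).2 ▸ card_pos.2 ⟨a, hai⟩
  have := hcard i
  have := isModel_blockTheory_iff.1 hmodel i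
  omega

lemma prod_choose_le_card_minModels_blockTheory (hs_pos : ∀ i, 0 < s i) :
    ∏ i, (#(B i)).choose (#(B i) + 1 - s i) ≤ #(minModels (blockTheory B s)) := by
  calc ∏ i, (#(B i)).choose (#(B i) + 1 - s i)
      = #(Fintype.piFinset fun i => (B i).powersetCard (#(B i) + 1 - s i)) := by
        simp [Fintype.card_piFinset, card_powersetCard]
    _ ≤ #(minModels (blockTheory B s)) := by
      refine card_le_card_of_injOn (fun f => univ.biUnion f) (fun f hf => ?_)
        fun f hf g hg hfg => ?_
      · have hmin := isMinModel_biUnion_blockTheory hB hs_pos (Fintype.mem_piFinset.1 hf)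
        exact mem_filter.2 ⟨mem_powerset.2 hmin.2.1, hmin⟩
      · have hfB i := (mem_powersetCard.1 (Fintype.mem_piFinset.1 hf i)).1
        have hgB i := (mem_powersetCard.1 (Fintype.mem_piFinset.1 hg i)).1
        funext i
        rw [← biUnion_inter_eq hB hfB i, ← biUnion_inter_eq hB hgB i]
        exact congrArg (· ∩ B i) hfg

end BlockTheory

section Construction

variable (k t n : ℕ)

def atomBlock (i : Fin (n / k + 1)) : Finset ℕ := (range n).filter (· / k = i)

/-- The last block consists of the `n % k` leftover atoms, which get unit clauses. -/
def clauseWidth (i : Fin (n / k + 1)) : ℕ := if i = Fin.last _ then 1 else t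

def blockCNF : CTheory := blockTheory (atomBlock k n) (clauseWidth k t n)

variable {k t n}

lemma pairwise_disjoint_atomBlock : Pairwise (Function.onFun Disjoint (atomBlock k n)) :=
  fun _ _ hij => disjoint_filter.2 fun _ _ hi hj => hij (Fin.ext (hi.symm.trans hj))

lemma biUnion_atomBlock : univ.biUnion (atomBlock k n) = range n := by
  ext a
  simp only [atomBlock, mem_biUnion, mem_univ, true_and, mem_filter]
  exact ⟨fun ⟨_, ha, _⟩ => ha, fun ha =>
    ⟨⟨a / k, Nat.lt_succ_of_le (Nat.div_le_div_right (mem_range.1 ha).le)⟩, ha, rfl⟩⟩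

lemma card_atomBlock_castSucc (i : Fin (n / k)) : #(atomBlock k n i.castSucc) = k := by
  have hk : 0 < k := Nat.pos_of_ne_zero fun h => by simpa [h] using i.pos
  have hin : (i + 1) * k ≤ n := (Nat.le_div_iff_mul_le hk).1 i.isLt
  have hIco : atomBlock k n i.castSucc = Ico (i * k) (i * k + k) := by
    ext a
    simp only [atomBlock, mem_filter, mem_range, mem_Ico, Fin.val_castSucc]
    constructor
    · rintro ⟨-, hai⟩
      rw [← hai]
      exact ⟨Nat.div_mul_le_self a k, Nat.lt_div_mul_add hk⟩
    · rintro ⟨hlo, hhi⟩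
      exact ⟨by linarith, Nat.div_eq_of_lt_le hlo (by linarith)⟩
  simp [hIco]

lemma clauseWidth_castSucc (i : Fin (n / k)) : clauseWidth k t n i.castSucc = t :=
  if_neg (Fin.castSucc_ne_last i)

lemma clauseWidth_last : clauseWidth k t n (Fin.last _) = 1 := if_pos rfl

lemma clauseWidth_pos (ht : 0 < t) (i : Fin (n / k + 1)) : 0 < clauseWidth k t n i := by
  unfold clauseWidth; split_ifs <;> omega

lemma clauseWidth_le (ht : 0 < t) (i : Fin (n / k + 1)) : clauseWidth k t n i ≤ t := by
  unfold clauseWidth; split_ifs <;> omega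

lemma thAtoms_blockCNF (ht : 0 < t) (htk : t ≤ k) : thAtoms (blockCNF k t n) = range n := by
  rw [blockCNF, thAtoms_blockTheory (clauseWidth_pos ht), biUnion_atomBlock]
  intro i hi
  rcases Fin.eq_castSucc_or_eq_last i with ⟨j, rfl⟩ | rfl
  · rwa [clauseWidth_castSucc, card_atomBlock_castSucc]
  · rw [clauseWidth_last]
    exact card_pos.2 hi

lemma sum_card_blockCNF_le (ht : 0 < t) :
    ∑ c ∈ blockCNF k t n, #c ≤ (k.choose t + 1) * n * t := by
  refine (sum_card_blockTheory_le (clauseWidth_le ht)).trans (Nat.mul_le_mul_right t ?_)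
  have hlast : #(atomBlock k n (Fin.last _)) ≤ n := (card_filter_le _ _).trans (card_range n).le
  rw [Fin.sum_univ_castSucc, clauseWidth_last, Nat.choose_one_right]
  simp only [clauseWidth_castSucc, card_atomBlock_castSucc, sum_const, card_univ, Fintype.card_fin,
    smul_eq_mul]
  nlinarith [Nat.div_le_self n k]

lemma pow_choose_le_card_minModels_blockCNF (ht : 0 < t) :
    k.choose (k + 1 - t) ^ (n / k) ≤ #(minModels (blockCNF k t n)) := by
  refine le_of_eq_of_le ?_ (prod_choose_le_card_minModels_blockTheory pairwise_disjoint_atomBlock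
    (clauseWidth_pos ht))
  rw [Fin.prod_univ_castSucc, clauseWidth_last]
  simp [clauseWidth_castSucc, card_atomBlock_castSucc]

lemma le_card_of_isModel_blockCNF {M : Finset ℕ} (hM : isModel M (blockCNF k t n)) :
    n / k * (k + 1 - t) ≤ #M := by
  refine le_trans ?_ (sum_le_card_of_isModel_blockTheory pairwise_disjoint_atomBlock hM)
  rw [Fin.sum_univ_castSucc]
  simp [clauseWidth_castSucc, card_atomBlock_castSucc]

end Construction

lemma inv_mul_rpow_one_div_pow_le {C : ℝ} (hC : 1 ≤ C) {k : ℕ} (hk : 0 < k) (n : ℕ) :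
    C⁻¹ * (C ^ (1 / (k : ℝ))) ^ n ≤ C ^ (n / k) := by
  have hC0 : 0 < C := by linarith
  rw [inv_mul_le_iff₀ hC0, ← pow_succ', ← Real.rpow_natCast, ← Real.rpow_mul hC0.le,
    ← Real.rpow_natCast C]
  apply Real.rpow_le_rpow_of_exponent_le hC
  rw [one_div_mul_eq_div, div_le_iff₀ (by positivity)]
  exact_mod_cast (Nat.lt_div_mul_add (a := n) hk).le.trans (by rw [add_mul, one_mul])

lemma lt_two_mul_div_mul {k n : ℕ} (hk : 0 < k) (h : k ≤ n) : n < 2 * (n / k * k) := by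
  have hq : 1 * k ≤ n / k * k := Nat.mul_le_mul_right k ((Nat.one_le_div_iff hk).2 h)
  have := Nat.lt_div_mul_add (a := n) hk
  omega

/-- For every `t ≥ 2` there are positive constants `d_t`, `D_t`, `D'_t` such that for every
`n ≥ 2t − 1` there is a `t`-CNF theory `T` with exactly `n` atoms, of size
`m = ∑_{c ∈ T} |c| ≤ d_t·n`, with at least `D_t·μ_t^n` minimal models, the sum of whose
cardinalities is at least `D'_t·n·μ_t^n`, where `μ_t = C(2t−1, t)^(1/(2t−1))`. -/
theorem t_cnf_lower_bound (t : ℕ) (ht : 2 ≤ t) :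
    ∃ d D D' : ℝ, 0 < d ∧ 0 < D ∧ 0 < D' ∧
      ∀ n : ℕ, 2 * t - 1 ≤ n →
        ∃ T : CTheory,
          (∀ c ∈ T, Clause.ok c) ∧ (∀ c ∈ T, c.card ≤ t) ∧
          (thAtoms T).card = n ∧
          ((∑ c ∈ T, c.card : ℕ) : ℝ) ≤ d * n ∧
          D * (((Nat.choose (2 * t - 1) t : ℝ)) ^ ((1 : ℝ) / ((2 * t - 1 : ℕ) : ℝ))) ^ n ≤
            (((thAtoms T).powerset.filter (fun M => isMinModel M T)).card : ℝ) ∧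
          D' * n * (((Nat.choose (2 * t - 1) t : ℝ)) ^ ((1 : ℝ) / ((2 * t - 1 : ℕ) : ℝ))) ^ n ≤
            ∑ M ∈ (thAtoms T).powerset.filter (fun M => isMinModel M T), (M.card : ℝ) := by
  set k := 2 * t - 1
  have hk : 0 < k := by omega
  have hkt : k + 1 - t = t := by omega
  set C : ℝ := (k.choose t : ℝ)
  have hC : 1 ≤ C := Nat.one_le_cast.2 (Nat.choose_pos (by omega))
  refine ⟨(C + 1) * t, C⁻¹, C⁻¹ / 4, by positivity, by positivity, by positivity, fun n hn => ?_⟩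
  have hcount : C⁻¹ * (C ^ (1 / (k : ℝ))) ^ n ≤ #(minModels (blockCNF k t n)) := by
    have h := pow_choose_le_card_minModels_blockCNF (k := k) (n := n) (by omega : 0 < t)
    rw [hkt] at h
    exact (inv_mul_rpow_one_div_pow_le hC hk n).trans
      (by exact_mod_cast h : ((k.choose t : ℕ) : ℝ) ^ (n / k) ≤ _)
  have hsum : #(minModels (blockCNF k t n)) * (n / k * t) ≤
      ∑ M ∈ minModels (blockCNF k t n), #M :=
    card_mul_le_sum_card_minModels fun M hM => hkt ▸ le_card_of_isModel_blockCNF hM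
  have hquarter : (n : ℝ) / 4 ≤ (n / k * t : ℕ) := by
    have := lt_two_mul_div_mul hk hn
    have := Nat.mul_le_mul_left (n / k) (show k ≤ 2 * t by omega)
    rw [div_le_iff₀ (by norm_num)]
    exact_mod_cast (by nlinarith : n ≤ n / k * t * 4)
  refine ⟨blockCNF k t n, fun c => ok_of_mem_blockTheory, fun c => card_le_of_mem_blockTheory
    (clauseWidth_le (by omega)), by rw [thAtoms_blockCNF (by omega) (by omega), card_range], ?_,
    hcount, ?_⟩
  · calc ((∑ c ∈ blockCNF k t n, #c : ℕ) : ℝ) ≤ ((k.choose t + 1) * n * t : ℕ) :=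
          Nat.cast_le.2 (sum_card_blockCNF_le (by omega))
      _ = (C + 1) * t * n := by push_cast; ring
  · calc C⁻¹ / 4 * n * (C ^ (1 / (k : ℝ))) ^ n = C⁻¹ * (C ^ (1 / (k : ℝ))) ^ n * (n / 4) := by
          ring
      _ ≤ #(minModels (blockCNF k t n)) * (n / k * t : ℕ) := by gcongr
      _ ≤ ∑ M ∈ minModels (blockCNF k t n), (#M : ℝ) := by exact_mod_cast hsum
end

section
/- Let X be a finite set of atoms and t an integer with 2 ≤ t ≤ |X|, and let E_{t,X} be the CNF theory consisting of all clauses {a_1, …, a_t} where a_1, …, a_t are pairwise distinct atoms of X (all occurring positively). Then the minimal models of E_{t,X} are exactly the subsets of X of cardinality |X| − t + 1; in particular, E_{t,X} has exactly C(|X|, t−1) minimal models. -/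
/-! A set `M` meets every `t`-subset of `X` iff it misses fewer than `t` atoms of `X`, so for
`M ⊆ X` being a model of `E_{t,X}` means `|M| > |X| − t`. Removing one atom lowers `|M|` by one,
hence the minimal models are exactly the subsets of `X` with `|M| = |X| − t + 1`, and there are
`C(|X|, |X| − t + 1) = C(|X|, t − 1)` of them. -/

open Classical

/-- `E_{t,X}`: the CNF theory of all clauses consisting of `t` pairwise distinct (positive)
atoms of `X`. -/
def Eth (t : ℕ) (X : Finset ℕ) : CTheory :=
  (X.powersetCard t).image (fun s => s.image (fun a => ((true, a) : Lit)))

lemma clauseAtoms_image_true (s : Finset ℕ) :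
    clauseAtoms (s.image fun a => ((true, a) : Lit)) = s := by
  simp [clauseAtoms, Finset.image_image]

lemma mem_Eth {t : ℕ} {X : Finset ℕ} {c : Clause} :
    c ∈ Eth t X ↔ ∃ s ⊆ X, s.card = t ∧ s.image (fun a => ((true, a) : Lit)) = c := by
  simp [Eth, Finset.mem_powersetCard, and_assoc]

lemma thAtoms_Eth {t : ℕ} {X : Finset ℕ} (ht : 1 ≤ t) (htX : t ≤ X.card) :
    thAtoms (Eth t X) = X := by
  ext x
  simp only [thAtoms, Finset.mem_sup, mem_Eth]
  constructor
  · rintro ⟨_, ⟨s, hsX, -, rfl⟩, hx⟩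
    rw [clauseAtoms_image_true] at hx
    exact hsX hx
  · intro hx
    obtain ⟨s, hxs, hsX, hs⟩ :=
      Finset.exists_subsuperset_card_eq (Finset.singleton_subset_iff.mpr hx) (by simpa using ht) htX
    refine ⟨_, ⟨s, hsX, hs, rfl⟩, ?_⟩
    rw [clauseAtoms_image_true]
    exact hxs (Finset.mem_singleton_self x)

lemma isModel_Eth_iff {t : ℕ} {X M : Finset ℕ} :
    isModel M (Eth t X) ↔ (X \ M).card < t := by
  simp only [isModel, mem_Eth]
  constructor
  · intro hmod
    by_contra! hcard
    obtain ⟨s, hs, rfl⟩ := Finset.exists_subset_card_eq hcard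
    obtain ⟨_, hl, hsat⟩ := hmod _ ⟨s, hs.trans Finset.sdiff_subset, rfl, rfl⟩
    obtain ⟨a, ha, rfl⟩ := Finset.mem_image.mp hl
    exact (Finset.mem_sdiff.mp (hs ha)).2 (by simpa [satLit] using hsat)
  · rintro hcard _ ⟨s, hsX, rfl, rfl⟩
    obtain ⟨a, has, haXM⟩ := Finset.not_subset.mp fun h => (Finset.card_le_card h).not_gt hcard
    have haM : a ∈ M := by simpa [hsX has] using haXM
    exact ⟨(true, a), Finset.mem_image_of_mem _ has, by simpa [satLit] using haM⟩

lemma isModel_Eth_iff_of_subset {t : ℕ} {X M : Finset ℕ} (hM : M ⊆ X) :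
    isModel M (Eth t X) ↔ X.card < M.card + t := by
  rw [isModel_Eth_iff, Finset.card_sdiff_of_subset hM]
  have := Finset.card_le_card hM
  omega

lemma isMinModel_Eth_iff {t : ℕ} {X M : Finset ℕ} (ht : 1 ≤ t) (htX : t ≤ X.card) :
    isMinModel M (Eth t X) ↔ M ⊆ X ∧ M.card = X.card - t + 1 := by
  rw [isMinModel, thAtoms_Eth ht htX]
  constructor
  · rintro ⟨hmod, hMX, hmin⟩
    rw [isModel_Eth_iff_of_subset hMX] at hmod
    refine ⟨hMX, le_antisymm ?_ (by omega)⟩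
    by_contra! hbig
    obtain ⟨x, hx⟩ := Finset.card_pos.mp (by omega : 0 < M.card)
    refine hmin _ (Finset.erase_ssubset hx) ?_
    rw [isModel_Eth_iff_of_subset ((Finset.erase_subset x M).trans hMX),
      Finset.card_erase_of_mem hx]
    omega
  · rintro ⟨hMX, hcard⟩
    refine ⟨(isModel_Eth_iff_of_subset hMX).mpr (by omega), hMX, fun M' hM' => ?_⟩
    rw [isModel_Eth_iff_of_subset (hM'.subset.trans hMX)]
    have := Finset.card_lt_card hM'
    omega

/-- For `2 ≤ t ≤ |X|`, the minimal models of `E_{t,X}` are exactly the subsets of `X` of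
cardinality `|X| − t + 1`; in particular `E_{t,X}` has exactly `C(|X|, t−1)` minimal models. -/
theorem Eth_minimal_models (X : Finset ℕ) (t : ℕ) (ht : 2 ≤ t) (htX : t ≤ X.card) :
    (∀ M : Finset ℕ, isMinModel M (Eth t X) ↔ (M ⊆ X ∧ M.card = X.card - t + 1)) ∧
    (X.powerset.filter (fun M => isMinModel M (Eth t X))).card = X.card.choose (t - 1) := by
  have hmin : ∀ M : Finset ℕ, isMinModel M (Eth t X) ↔ (M ⊆ X ∧ M.card = X.card - t + 1) :=
    fun M => isMinModel_Eth_iff (by omega) htX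
  refine ⟨hmin, ?_⟩
  have hfilter : X.powerset.filter (fun M => isMinModel M (Eth t X)) =
      X.powersetCard (X.card - t + 1) := by
    ext M
    simp [Finset.mem_powersetCard, hmin]
  rw [hfilter, Finset.card_powersetCard]
  exact Nat.choose_symm_of_eq_add (by omega)
end
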